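/- arXiv:2602.16984 — 6 statements merged into one kernel-verified Lean document; each statement's English description precedes it below -/
import Mathlib

section
/- Let P and Q be probability measures on a standard Borel space and let m ≥ 1 be a natural number. Then the m-fold product measures satisfy 1 − TV(P^{⊗m}, Q^{⊗m}) ≥ (1 − TV(P, Q))^m, where P^{⊗m} denotes the product measure of m independent copies of P (the pi measure over Fin m). -/
open MeasureTheory
open scoped ENNReal

/-- Total variation distance between two measures: the supremum over measurable
sets `A` of `|P A - Q A|`. -/
noncomputable def TV {Ω : Type*} [MeasurableSpace Ω] (P Q : Measure Ω) : ℝ :=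
  ⨆ A : {s : Set Ω // MeasurableSet s}, |(P A.1).toReal - (Q A.1).toReal|

section Aux

variable {Ω : Type*} [MeasurableSpace Ω]

lemma prod_mono_aux {α β : Type*} [MeasurableSpace α] [MeasurableSpace β]
    (μ₁ μ₂ : Measure α) (ν₁ ν₂ : Measure β) [SFinite ν₁] [SFinite ν₂]
    (hμ : μ₁ ≤ μ₂) (hν : ν₁ ≤ ν₂) : μ₁.prod ν₁ ≤ μ₂.prod ν₂ := by
  rw [Measure.le_iff]
  intro s hs
  rw [Measure.prod_apply hs, Measure.prod_apply hs]
  exact lintegral_mono' hμ fun x => hν _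

lemma pi_mono_aux : ∀ (n : ℕ) {X : Type*} [MeasurableSpace X] (μ ν : Measure X)
    [IsFiniteMeasure μ] [IsFiniteMeasure ν], μ ≤ ν →
    Measure.pi (fun _ : Fin n => μ) ≤ Measure.pi (fun _ : Fin n => ν) := by
  intro n
  induction n with
  | zero =>
    intro X _ μ ν _ _ _
    rw [Measure.le_iff]
    intro s hs
    rcases s.eq_empty_or_nonempty with rfl | ⟨x, hx⟩
    · simp
    · have hsu : s = Set.univ := by
        apply Set.eq_univ_of_forall
        intro y
        have : y = x := Subsingleton.elim y x
        rwa [this]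
      subst hsu
      rw [Measure.pi_univ, Measure.pi_univ]
      simp
  | succ n ih =>
    intro X _ μ ν _ _ h
    have e := MeasurableEquiv.piFinSuccAbove (fun _ : Fin (n + 1) => X) 0
    have h1 := measurePreserving_piFinSuccAbove (fun _ : Fin (n + 1) => μ) 0
    have h2 := measurePreserving_piFinSuccAbove (fun _ : Fin (n + 1) => ν) 0
    rw [Measure.le_iff]
    intro s hs
    have key : ∀ (κ : Measure X) [IsFiniteMeasure κ],
        Measure.pi (fun _ : Fin (n + 1) => κ) s
          = (κ.prod (Measure.pi fun _ : Fin n => κ))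
              ((MeasurableEquiv.piFinSuccAbove (fun _ : Fin (n + 1) => X) 0).symm ⁻¹' s) := by
      intro κ _
      have hp := measurePreserving_piFinSuccAbove (fun _ : Fin (n + 1) => κ) 0
      rw [← hp.map_eq, Measure.map_apply (MeasurableEquiv.measurable _)
        ((MeasurableEquiv.measurable _) hs)]
      congr 1
      ext x
      simp
    rw [key μ, key ν]
    exact Measure.le_iff'.1 (prod_mono_aux μ ν _ _ h (ih μ ν h)) _

/-- TV is bounded by 1 for probability measures. -/
lemma TV_bddAbove (P Q : Measure Ω) [IsProbabilityMeasure P] [IsProbabilityMeasure Q] :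
    ∀ A : {s : Set Ω // MeasurableSet s}, |(P A.1).toReal - (Q A.1).toReal| ≤ 1 := by
  intro A
  have h1 : (P A.1).toReal ≤ 1 := by
    rw [← ENNReal.toReal_one]
    exact ENNReal.toReal_mono ENNReal.one_ne_top prob_le_one
  have h2 : (Q A.1).toReal ≤ 1 := by
    rw [← ENNReal.toReal_one]
    exact ENNReal.toReal_mono ENNReal.one_ne_top prob_le_one
  have h3 : 0 ≤ (P A.1).toReal := ENNReal.toReal_nonneg
  have h4 : 0 ≤ (Q A.1).toReal := ENNReal.toReal_nonneg
  rw [abs_le]; constructor <;> linarith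

/-- If `ν ≤ P` and `ν ≤ Q` with `P`, `Q` probability measures, then
`TV P Q ≤ 1 - ν univ`. -/
lemma TV_le_of_common (P Q ν : Measure Ω) [IsProbabilityMeasure P] [IsProbabilityMeasure Q]
    (hP : ν ≤ P) (hQ : ν ≤ Q) : TV P Q ≤ 1 - (ν Set.univ).toReal := by
  have hνfin : IsFiniteMeasure ν := isFiniteMeasure_of_le P hP
  apply ciSup_le
  intro A
  have key : ∀ (R : Measure Ω) [IsProbabilityMeasure R], ν ≤ R →
      (R A.1).toReal - (ν A.1).toReal ≤ 1 - (ν Set.univ).toReal := by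
    intro R _ hR
    have h1 : R A.1 + ν Set.univ ≤ 1 + ν A.1 := by
      have : ν Set.univ = ν A.1 + ν A.1ᶜ := (measure_add_measure_compl A.2).symm
      rw [this, ← add_assoc]
      have h2 : R A.1 + ν A.1ᶜ ≤ 1 := by
        calc R A.1 + ν A.1ᶜ ≤ R A.1 + R A.1ᶜ := by gcongr
        _ = 1 := by rw [measure_add_measure_compl A.2, measure_univ]
      calc R A.1 + ν A.1 + ν A.1ᶜ = R A.1 + ν A.1ᶜ + ν A.1 := by ring
      _ ≤ 1 + ν A.1 := by gcongr
    have hfin : ∀ s, ν s ≠ ⊤ := fun s => measure_ne_top ν s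
    have hRfin : ∀ s, R s ≠ ⊤ := fun s => measure_ne_top R s
    have := ENNReal.toReal_mono (by finiteness) h1
    rw [ENNReal.toReal_add (hRfin _) (hfin _), ENNReal.toReal_add ENNReal.one_ne_top (hfin _),
      ENNReal.toReal_one] at this
    linarith
  have hνA : (ν A.1).toReal ≤ (P A.1).toReal := by
    apply ENNReal.toReal_mono (measure_ne_top P _) (hP _)
  have hνA' : (ν A.1).toReal ≤ (Q A.1).toReal := by
    apply ENNReal.toReal_mono (measure_ne_top Q _) (hQ _)
  have hPA := key P hP
  have hQA := key Q hQ
  rw [abs_le]; constructor <;> [linarith; linarith]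

end Aux

/-- tensorization of total variation: for probability measures `P`, `Q`
on a standard Borel space and `m ≥ 1`,
`1 − TV(P^{⊗m}, Q^{⊗m}) ≥ (1 − TV(P,Q))^m`. -/
theorem stmt_2 {X : Type*} [MeasurableSpace X] [StandardBorelSpace X]
    (P Q : Measure X) [IsProbabilityMeasure P] [IsProbabilityMeasure Q]
    (m : ℕ) (hm : 1 ≤ m) :
    1 - TV (Measure.pi (fun _ : Fin m => P)) (Measure.pi (fun _ : Fin m => Q))
      ≥ (1 - TV P Q) ^ m := by
  classical
  set μ : Measure X := P + Q with hμ
  set f : X → ℝ≥0∞ := P.rnDeriv μ with hf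
  set g : X → ℝ≥0∞ := Q.rnDeriv μ with hg
  have hfmeas : Measurable f := Measure.measurable_rnDeriv P μ
  have hgmeas : Measurable g := Measure.measurable_rnDeriv Q μ
  have hPf : μ.withDensity f = P :=
    Measure.withDensity_rnDeriv_eq P μ (Measure.absolutelyContinuous_of_le (Measure.le_add_right le_rfl))
  have hQg : μ.withDensity g = Q :=
    Measure.withDensity_rnDeriv_eq Q μ (Measure.absolutelyContinuous_of_le (Measure.le_add_left le_rfl))
  set ν : Measure X := μ.withDensity (fun x => min (f x) (g x)) with hν
  have hνP : ν ≤ P := by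
    rw [← hPf]
    exact withDensity_mono (Filter.Eventually.of_forall fun x => min_le_left _ _)
  have hνQ : ν ≤ Q := by
    rw [← hQg]
    exact withDensity_mono (Filter.Eventually.of_forall fun x => min_le_right _ _)
  have hνfin : IsFiniteMeasure ν := isFiniteMeasure_of_le P hνP
  -- the key identity : P A + ν univ = 1 + Q A  on A = {x | g x ≤ f x}
  set A : Set X := {x | g x ≤ f x} with hA
  have hAmeas : MeasurableSet A := measurableSet_le hgmeas hfmeas
  have hPA : P A = ∫⁻ x in A, f x ∂μ := by
    rw [← hPf, withDensity_apply _ hAmeas]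
  have hQA : Q A = ∫⁻ x in A, g x ∂μ := by
    rw [← hQg, withDensity_apply _ hAmeas]
  have hνuniv : ν Set.univ = (∫⁻ x in A, g x ∂μ) + ∫⁻ x in Aᶜ, f x ∂μ := by
    have : ν Set.univ = ∫⁻ x, min (f x) (g x) ∂μ := by
      rw [hν, withDensity_apply _ MeasurableSet.univ, Measure.restrict_univ]
    rw [this, ← lintegral_add_compl (fun x => min (f x) (g x)) hAmeas]
    congr 1
    · apply setLIntegral_congr_fun_ae hAmeas
      exact Filter.Eventually.of_forall fun x hx => min_eq_right hx
    · apply setLIntegral_congr_fun_ae hAmeas.compl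
      exact Filter.Eventually.of_forall fun x hx => min_eq_left (le_of_not_ge hx)
  have hkey : P A + ν Set.univ = 1 + Q A := by
    have h1 : (∫⁻ x, f x ∂μ) = 1 := by
      have h2 : (∫⁻ x, f x ∂μ) = P Set.univ := by
        rw [← hPf, withDensity_apply _ MeasurableSet.univ, Measure.restrict_univ]
      rw [h2, measure_univ]
    rw [hPA, hQA, hνuniv]
    calc (∫⁻ x in A, f x ∂μ) + ((∫⁻ x in A, g x ∂μ) + ∫⁻ x in Aᶜ, f x ∂μ)
        = (∫⁻ x in A, g x ∂μ) + ((∫⁻ x in A, f x ∂μ) + ∫⁻ x in Aᶜ, f x ∂μ) := by ring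
      _ = (∫⁻ x in A, g x ∂μ) + 1 := by
            have h3 : (∫⁻ x in A, f x ∂μ) + ∫⁻ x in Aᶜ, f x ∂μ = 1 := by
              rw [← h1]
              exact lintegral_add_compl (fun x => f x) hAmeas
            rw [h3]
      _ = 1 + (∫⁻ x in A, g x ∂μ) := add_comm _ _
  -- hence 1 - TV P Q ≤ ν univ (in reals)
  have hTVge : 1 - (ν Set.univ).toReal ≤ TV P Q := by
    have hle : 1 - (ν Set.univ).toReal ≤ |(P A).toReal - (Q A).toReal| := by
      have h1 : (P A).toReal + (ν Set.univ).toReal = 1 + (Q A).toReal := by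
        have := congrArg ENNReal.toReal hkey
        rwa [ENNReal.toReal_add (measure_ne_top P _) (measure_ne_top ν _),
          ENNReal.toReal_add ENNReal.one_ne_top (measure_ne_top Q _), ENNReal.toReal_one] at this
      have : (P A).toReal - (Q A).toReal = 1 - (ν Set.univ).toReal := by linarith
      rw [← this]
      exact le_abs_self _
    refine hle.trans ?_
    have hbdd : BddAbove (Set.range fun B : {s : Set X // MeasurableSet s} =>
        |(P B.1).toReal - (Q B.1).toReal|) := ⟨1, by
      rintro x ⟨B, rfl⟩
      exact TV_bddAbove P Q B⟩
    exact le_ciSup hbdd (⟨A, hAmeas⟩ : {s : Set X // MeasurableSet s})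
  -- product bound
  have hpi : Measure.pi (fun _ : Fin m => ν) ≤ Measure.pi (fun _ : Fin m => P) :=
    pi_mono_aux m ν P hνP
  have hpiQ : Measure.pi (fun _ : Fin m => ν) ≤ Measure.pi (fun _ : Fin m => Q) :=
    pi_mono_aux m ν Q hνQ
  have hTVpi : TV (Measure.pi (fun _ : Fin m => P)) (Measure.pi (fun _ : Fin m => Q))
      ≤ 1 - ((Measure.pi (fun _ : Fin m => ν)) Set.univ).toReal :=
    TV_le_of_common _ _ _ hpi hpiQ
  have hpiuniv : (Measure.pi (fun _ : Fin m => ν)) Set.univ = (ν Set.univ) ^ m := by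
    rw [Measure.pi_univ, Finset.prod_const, Finset.card_univ, Fintype.card_fin]
  have hνle1 : ν Set.univ ≤ 1 := le_trans (hνP _) (by simp)
  have hpow : ((Measure.pi (fun _ : Fin m => ν)) Set.univ).toReal = (ν Set.univ).toReal ^ m := by
    rw [hpiuniv, ENNReal.toReal_pow]
  have hTVle1 : TV P Q ≤ 1 := ciSup_le (TV_bddAbove P Q)
  have hTVnonneg : 0 ≤ 1 - TV P Q := by linarith
  have : (1 - TV P Q) ^ m ≤ (ν Set.univ).toReal ^ m := by
    apply pow_le_pow_left₀ hTVnonneg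
    linarith
  calc (1 - TV P Q) ^ m ≤ (ν Set.univ).toReal ^ m := this
    _ = ((Measure.pi (fun _ : Fin m => ν)) Set.univ).toReal := hpow.symm
    _ ≤ 1 - TV (Measure.pi (fun _ : Fin m => P)) (Measure.pi (fun _ : Fin m => Q)) := by
        linarith
end

section
/- Let q be a prime power, F_q the finite field with q elements, m ≥ 1, and T ⊆ F_q a subset with |T| = k. Draw a coefficient vector a = (a₀, …, a_{m−1}) uniformly from F_q^m and let h_a be the polynomial function x ↦ a_{m−1}x^{m−1} + ⋯ + a₁x + a₀. Consider any adaptive querying strategy making m queries: the first query x₁ ∈ F_q is fixed, and for each i ≥ 2 the query x_i is an arbitrary function of the binary responses r₁, …, r_{i−1}, where r_j = 1 if h_a(x_j) ∈ T and r_j = 0 otherwise. Then the probability (over the uniform draw of a) that there exists i ≤ m with h_a(x_i) ∈ T is at most m·k/q. -/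
open Finset

def polyHash {F : Type*} [Field F] {m : ℕ} (a : Fin m → F) (x : F) : F :=
  ∑ j : Fin m, a j * x ^ (j : ℕ)

def adaptResp {F : Type*} [DecidableEq F] (σ : ∀ i : ℕ, (Fin i → Bool) → F)
    (h : F → F) (T : Finset F) (i : ℕ) : Bool :=
  decide (h (σ i (fun j : Fin i => adaptResp σ h T j)) ∈ T)
termination_by i
decreasing_by decreasing_tactic

def adaptQuery {F : Type*} [DecidableEq F] (σ : ∀ i : ℕ, (Fin i → Bool) → F)
    (h : F → F) (T : Finset F) (i : ℕ) : F :=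
  σ i (fun j : Fin i => adaptResp σ h T j)

lemma polyHash_cons {F : Type*} [Field F] {n : ℕ} (c : F) (b : Fin n → F) (x : F) :
    polyHash (Fin.cons c b) x = c + x * polyHash b x := by
  unfold polyHash
  rw [Fin.sum_univ_succ]
  simp [Fin.cons, mul_sum, pow_succ]
  ring_nf
  congr 1
  ext j
  ring

lemma count_hash {F : Type*} [Field F] [Fintype F] [DecidableEq F]
    (T : Finset F) (n : ℕ) (x : F) :
    (univ.filter fun a : Fin (n+1) → F => polyHash a x ∈ T).card
      = T.card * (Fintype.card F) ^ n := by
  rw [Finset.card_eq_sum_card_fiberwise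
    (f := fun a : Fin (n+1) → F => Fin.tail a) (t := univ) (fun _ _ => mem_univ _)]
  have : ∀ b : Fin n → F,
      ((univ.filter fun a : Fin (n+1) → F => polyHash a x ∈ T).filter
        (fun a => Fin.tail a = b)).card = T.card := by
    intro b
    apply Finset.card_nbij (i := fun a => polyHash a x)
    · intro a ha
      simp only [mem_coe, mem_filter, mem_univ, true_and] at ha
      exact ha.1
    · intro a₁ h₁ a₂ h₂ he
      simp only [Set.mem_setOf_eq, coe_filter, mem_univ, true_and] at h₁ h₂
      have e₁ : a₁ = Fin.cons (a₁ 0) (Fin.tail a₁) := (Fin.cons_self_tail a₁).symm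
      have e₂ : a₂ = Fin.cons (a₂ 0) (Fin.tail a₂) := (Fin.cons_self_tail a₂).symm
      rw [e₁, e₂, h₁.2, h₂.2]
      have := he
      rw [e₁, e₂, h₁.2, h₂.2] at this
      simp only [polyHash_cons] at this
      rw [add_right_cancel this]
    · intro t ht
      refine ⟨Fin.cons (t - x * polyHash b x) b, ?_, ?_⟩
      · simp only [Set.mem_setOf_eq, coe_filter, mem_univ, true_and]
        constructor
        · simp only [mem_filter, mem_univ, true_and, polyHash_cons]
          simpa using ht
        · simp [Fin.tail_cons]
      · simp only [polyHash_cons]; ring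
  rw [Finset.sum_congr rfl (fun b _ => this b)]
  simp [mul_comm, Finset.card_univ]

lemma hit_first {F : Type*} [DecidableEq F] (σ : ∀ i : ℕ, (Fin i → Bool) → F)
    (h : F → F) (T : Finset F) (m : ℕ)
    (hx : ∃ i : Fin m, h (adaptQuery σ h T i) ∈ T) :
    ∃ i : Fin m, h (σ i (fun _ => false)) ∈ T := by
  have key : ∀ i : ℕ, h (adaptQuery σ h T i) ∈ T ↔ adaptResp σ h T i = true := by
    intro i
    rw [adaptResp, decide_eq_true_iff]
    rfl
  obtain ⟨i, hi⟩ := hx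
  have hP : ∃ j : ℕ, adaptResp σ h T j = true := ⟨i, (key i).1 hi⟩
  classical
  let i0 := Nat.find hP
  have hi0 : adaptResp σ h T i0 = true := Nat.find_spec hP
  have hmin : ∀ j < i0, adaptResp σ h T j = false := by
    intro j hj
    simpa using Nat.find_min hP hj
  have hle : i0 ≤ (i : ℕ) := Nat.find_le ((key i).1 hi)
  refine ⟨⟨i0, lt_of_le_of_lt hle i.isLt⟩, ?_⟩
  have : (fun j : Fin i0 => adaptResp σ h T j) = fun _ => false := by
    funext j
    exact hmin j j.isLt
  rw [adaptResp] at hi0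
  rw [this] at hi0
  exact decide_eq_true_iff.mp hi0

/-- over a uniformly random coefficient vector `a ∈ F_q^m` for the
polynomial hash `h_a`, any adaptive strategy making `m` queries (each query an arbitrary
function of the previous binary trigger-membership responses) hits the trigger set
`{x : h_a x ∈ T}` with probability at most `m·k/q`, where `k = |T|` and `q = |F_q|`. -/
theorem stmt_4 {F : Type*} [Field F] [Fintype F] [DecidableEq F]
    (T : Finset F) (k : ℕ) (hk : T.card = k)
    (m : ℕ) (hm : 1 ≤ m) (σ : ∀ i : ℕ, (Fin i → Bool) → F) :
    (Nat.card {a : Fin m → F //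
        ∃ i : Fin m, polyHash a (adaptQuery σ (polyHash a) T i) ∈ T} : ℝ)
      / (Fintype.card F : ℝ) ^ m
    ≤ (m : ℝ) * k / (Fintype.card F : ℝ) := by
  classical
  obtain ⟨n, rfl⟩ : ∃ n, m = n + 1 := ⟨m - 1, (Nat.succ_pred_eq_of_pos hm).symm⟩
  set q := Fintype.card F with hq
  have hq1 : 1 ≤ q := Fintype.card_pos
  have hq0 : (0:ℝ) < q := by exact_mod_cast hq1
  -- card bound
  have hsub : (univ.filter fun a : Fin (n+1) → F =>
        ∃ i : Fin (n+1), polyHash a (adaptQuery σ (polyHash a) T i) ∈ T)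
      ⊆ univ.biUnion (fun i : Fin (n+1) =>
        univ.filter fun a : Fin (n+1) → F => polyHash a (σ i (fun _ => false)) ∈ T) := by
    intro a ha
    simp only [mem_filter, mem_univ, true_and] at ha
    obtain ⟨i, hi⟩ := hit_first σ (polyHash a) T (n+1) ha
    exact mem_biUnion.2 ⟨i, mem_univ _, by simp [hi]⟩
  have hcard : (univ.filter fun a : Fin (n+1) → F =>
        ∃ i : Fin (n+1), polyHash a (adaptQuery σ (polyHash a) T i) ∈ T).card
      ≤ (n+1) * (k * q ^ n) := by
    calc _ ≤ (univ.biUnion (fun i : Fin (n+1) =>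
          univ.filter fun a : Fin (n+1) → F =>
            polyHash a (σ i (fun _ => false)) ∈ T)).card := Finset.card_le_card hsub
      _ ≤ ∑ i : Fin (n+1), (univ.filter fun a : Fin (n+1) → F =>
            polyHash a (σ i (fun _ => false)) ∈ T).card := Finset.card_biUnion_le
      _ = ∑ _i : Fin (n+1), k * q ^ n := by
          refine Finset.sum_congr rfl fun i _ => ?_
          rw [count_hash, hk]
      _ = (n+1) * (k * q ^ n) := by simp [mul_comm]
  have hNat : Nat.card {a : Fin (n+1) → F //
        ∃ i : Fin (n+1), polyHash a (adaptQuery σ (polyHash a) T i) ∈ T}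
      = (univ.filter fun a : Fin (n+1) → F =>
        ∃ i : Fin (n+1), polyHash a (adaptQuery σ (polyHash a) T i) ∈ T).card := by
    rw [Nat.card_eq_fintype_card, Fintype.card_subtype]
  rw [hNat]
  rw [div_le_div_iff₀ (by positivity) hq0]
  have : ((univ.filter fun a : Fin (n+1) → F =>
        ∃ i : Fin (n+1), polyHash a (adaptQuery σ (polyHash a) T i) ∈ T).card : ℝ)
      ≤ ((n+1) * (k * q ^ n) : ℕ) := by exact_mod_cast hcard
  calc ((univ.filter fun a : Fin (n+1) → F =>
        ∃ i : Fin (n+1), polyHash a (adaptQuery σ (polyHash a) T i) ∈ T).card : ℝ) * q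
      ≤ (((n+1) * (k * q ^ n) : ℕ) : ℝ) * q := by
        apply mul_le_mul_of_nonneg_right this hq0.le
    _ = (((n:ℕ)+1 : ℕ) : ℝ) * k * (q:ℝ) ^ (n+1) := by push_cast; ring
end

section
/- Let P₀ and P₁ be probability measures on a standard Borel space Ω with TV(P₀, P₁) ≤ ε for some ε ∈ [0,1], let r₀, r₁ ∈ ℝ be deployment-risk values with |r₁ − r₀| ≥ δ·L where δ, L ≥ 0, and let m ≥ 1. Then for every measurable estimator R̂ : Ω^m → ℝ, the worst-case expected absolute error over the two hypotheses satisfies max_{j ∈ {0,1}} ∫ |R̂ − r_j| d(P_j)^{⊗m} ≥ (δL/4)(1 − ε)^m. -/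
open MeasureTheory

open Set in
private lemma aux_boundedBy_mono {α : Type*} {m m' : Set α → ENNReal} (h : ∀ s, m s ≤ m' s) :
    OuterMeasure.boundedBy m ≤ OuterMeasure.boundedBy m' := by
  intro s
  rw [OuterMeasure.boundedBy_apply, OuterMeasure.boundedBy_apply]
  exact iInf_mono fun t => iInf_mono fun _ =>
    ENNReal.tsum_le_tsum fun n => iSup_mono fun _ => h _

/-- Monotonicity of the product measure. -/
private lemma aux_pi_mono {ι : Type*} [Fintype ι] {α : ι → Type*} [∀ i, MeasurableSpace (α i)]
    {μ ν : ∀ i, Measure (α i)} (h : ∀ i, ν i ≤ μ i) : Measure.pi ν ≤ Measure.pi μ := by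
  rw [Measure.le_iff]
  intro s hs
  rw [Measure.pi_def, Measure.pi_def, toMeasure_apply _ _ hs, toMeasure_apply _ _ hs]
  refine (?_ : OuterMeasure.pi (fun i => (ν i).toOuterMeasure)
      ≤ OuterMeasure.pi (fun i => (μ i).toOuterMeasure)) s
  rw [OuterMeasure.pi, OuterMeasure.pi]
  apply aux_boundedBy_mono
  intro t
  unfold MeasureTheory.piPremeasure
  exact Finset.prod_le_prod (fun i _ => zero_le) (fun i _ => h i _)

open Set in
/-- Existence of a common lower-bound measure with mass at least `1 - ε`. -/
private lemma aux_lower_measure {Ω : Type*} [MeasurableSpace Ω]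
    (P₀ P₁ : Measure Ω) [IsProbabilityMeasure P₀] [IsProbabilityMeasure P₁]
    (ε : ℝ) (hTV : TV P₀ P₁ ≤ ε) :
    ∃ ν : Measure Ω, ν ≤ P₀ ∧ ν ≤ P₁ ∧ IsFiniteMeasure ν ∧ ENNReal.ofReal (1 - ε) ≤ ν univ := by
  have key : ∀ A : Set Ω, MeasurableSet A → (P₀ A).toReal - (P₁ A).toReal ≤ ε := by
    intro A hA
    have hb : BddAbove (Set.range fun A : {s : Set Ω // MeasurableSet s} =>
        |(P₀ A.1).toReal - (P₁ A.1).toReal|) := by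
      refine ⟨1, ?_⟩
      rintro x ⟨B, rfl⟩
      rw [abs_sub_le_iff]
      constructor
      · have h1 : (P₀ B.1).toReal ≤ 1 := by
          simpa using ENNReal.toReal_mono (by simp) (prob_le_one (μ := P₀) (s := B.1))
        have h2 : 0 ≤ (P₁ B.1).toReal := ENNReal.toReal_nonneg
        linarith
      · have h1 : (P₁ B.1).toReal ≤ 1 := by
          simpa using ENNReal.toReal_mono (by simp) (prob_le_one (μ := P₁) (s := B.1))
        have h2 : 0 ≤ (P₀ B.1).toReal := ENNReal.toReal_nonneg
        linarith
    calc (P₀ A).toReal - (P₁ A).toReal ≤ |(P₀ A).toReal - (P₁ A).toReal| := le_abs_self _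
      _ ≤ _ := le_trans (le_ciSup hb ⟨A, hA⟩) hTV
  obtain ⟨s, hs, hss, hsc⟩ := hahn_decomposition (μ := P₀) (ν := P₁)
  refine ⟨P₁.restrict s + P₀.restrict sᶜ, ?_, ?_, ?_, ?_⟩
  · rw [Measure.le_iff]
    intro t ht
    rw [Measure.add_apply, Measure.restrict_apply ht, Measure.restrict_apply ht]
    calc P₁ (t ∩ s) + P₀ (t ∩ sᶜ) ≤ P₀ (t ∩ s) + P₀ (t ∩ sᶜ) := by
          refine add_le_add ?_ le_rfl
          exact hss _ (ht.inter hs) inter_subset_right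
      _ = P₀ t := by rw [← Set.diff_eq, measure_inter_add_diff t hs]
  · rw [Measure.le_iff]
    intro t ht
    rw [Measure.add_apply, Measure.restrict_apply ht, Measure.restrict_apply ht]
    calc P₁ (t ∩ s) + P₀ (t ∩ sᶜ) ≤ P₁ (t ∩ s) + P₁ (t ∩ sᶜ) := by
          refine add_le_add le_rfl ?_
          exact hsc _ (ht.inter hs.compl) inter_subset_right
      _ = P₁ t := by rw [← Set.diff_eq, measure_inter_add_diff t hs]
  · infer_instance
  · rw [Measure.add_apply, Measure.restrict_apply MeasurableSet.univ,
      Measure.restrict_apply MeasurableSet.univ, Set.univ_inter, Set.univ_inter]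
    have h0 : P₁ s + P₀ sᶜ ≠ ⊤ := by finiteness
    rw [ENNReal.ofReal_le_iff_le_toReal h0]
    have e1 : (P₀ sᶜ).toReal = 1 - (P₀ s).toReal := by
      have h := measure_add_measure_compl (μ := P₀) hs
      have : (P₀ s).toReal + (P₀ sᶜ).toReal = 1 := by
        rw [← ENNReal.toReal_add (measure_ne_top _ _) (measure_ne_top _ _), h, measure_univ,
          ENNReal.toReal_one]
      linarith
    rw [ENNReal.toReal_add (measure_ne_top _ _) (measure_ne_top _ _), e1]
    have := key s hs
    linarith

/-- passive minimax lower bound, general form: if the single-query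
output distributions satisfy `TV(P₀,P₁) ≤ ε` and the deployment risks satisfy
`|r₁ − r₀| ≥ δL`, then any measurable estimator from `m` i.i.d. queries has worst-case
expected absolute error at least `(δL/4)(1−ε)^m`. -/
theorem stmt_8 {Ω : Type*} [MeasurableSpace Ω] [StandardBorelSpace Ω]
    (P₀ P₁ : Measure Ω) [IsProbabilityMeasure P₀] [IsProbabilityMeasure P₁]
    (ε : ℝ) (hε0 : 0 ≤ ε) (hε1 : ε ≤ 1) (hTV : TV P₀ P₁ ≤ ε)
    (r₀ r₁ : ℝ) (δ L : ℝ) (hδ : 0 ≤ δ) (hL : 0 ≤ L) (hgap : |r₁ - r₀| ≥ δ * L)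
    (m : ℕ) (hm : 1 ≤ m)
    (R : (Fin m → Ω) → ℝ) (hR : Measurable R) :
    max (∫⁻ x, ENNReal.ofReal |R x - r₀| ∂(Measure.pi (fun _ : Fin m => P₀)))
        (∫⁻ x, ENNReal.ofReal |R x - r₁| ∂(Measure.pi (fun _ : Fin m => P₁)))
      ≥ ENNReal.ofReal ((δ * L / 4) * (1 - ε) ^ m) := by
  obtain ⟨ν, hν0, hν1, hνfin, hνuniv⟩ := aux_lower_measure P₀ P₁ ε hTV
  haveI := hνfin
  set d : ℝ := δ * L with hd
  have hd0 : 0 ≤ d := mul_nonneg hδ hL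
  set Pm₀ := Measure.pi (fun _ : Fin m => P₀) with hPm₀
  set Pm₁ := Measure.pi (fun _ : Fin m => P₁) with hPm₁
  set νm := Measure.pi (fun _ : Fin m => ν) with hνm
  set A : Set (Fin m → Ω) := {x | d / 2 ≤ |R x - r₀|} with hAdef
  have hA : MeasurableSet A := measurableSet_le measurable_const (hR.sub measurable_const).abs
  set I₀ := ∫⁻ x, ENNReal.ofReal |R x - r₀| ∂Pm₀ with hI₀
  set I₁ := ∫⁻ x, ENNReal.ofReal |R x - r₁| ∂Pm₁ with hI₁
  -- the two set-integral lower bounds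
  have h₀ : ENNReal.ofReal (d / 2) * Pm₀ A ≤ I₀ := by
    calc ENNReal.ofReal (d / 2) * Pm₀ A = ∫⁻ _ in A, ENNReal.ofReal (d / 2) ∂Pm₀ :=
          (setLIntegral_const A _).symm
      _ ≤ ∫⁻ x in A, ENNReal.ofReal |R x - r₀| ∂Pm₀ :=
          setLIntegral_mono ((hR.sub measurable_const).abs.ennreal_ofReal)
            (fun x hx => ENNReal.ofReal_le_ofReal hx)
      _ ≤ I₀ := setLIntegral_le_lintegral A _
  have h₁ : ENNReal.ofReal (d / 2) * Pm₁ Aᶜ ≤ I₁ := by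
    calc ENNReal.ofReal (d / 2) * Pm₁ Aᶜ = ∫⁻ _ in Aᶜ, ENNReal.ofReal (d / 2) ∂Pm₁ :=
          (setLIntegral_const Aᶜ _).symm
      _ ≤ ∫⁻ x in Aᶜ, ENNReal.ofReal |R x - r₁| ∂Pm₁ := by
          refine setLIntegral_mono ((hR.sub measurable_const).abs.ennreal_ofReal)
            (fun x hx => ENNReal.ofReal_le_ofReal ?_)
          have hx' : |R x - r₀| < d / 2 := lt_of_not_ge hx
          have h := abs_sub (R x - r₀) (R x - r₁)
          rw [show (R x - r₀) - (R x - r₁) = r₁ - r₀ by ring] at h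
          linarith [hgap]
      _ ≤ I₁ := setLIntegral_le_lintegral Aᶜ _
  -- lower bound on the testing affinity
  have hmass : ENNReal.ofReal ((1 - ε) ^ m) ≤ Pm₀ A + Pm₁ Aᶜ := by
    calc ENNReal.ofReal ((1 - ε) ^ m) = (ENNReal.ofReal (1 - ε)) ^ m :=
          ENNReal.ofReal_pow (by linarith) m
      _ ≤ (ν Set.univ) ^ m := by gcongr
      _ = νm Set.univ := by
          rw [hνm, Measure.pi_univ]
          simp
      _ = νm A + νm Aᶜ := (measure_add_measure_compl hA).symm
      _ ≤ Pm₀ A + Pm₁ Aᶜ := by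
          gcongr
          · exact aux_pi_mono fun _ => hν0
          · exact aux_pi_mono fun _ => hν1
  have hsum : 2 * ENNReal.ofReal ((d / 4) * (1 - ε) ^ m) ≤ I₀ + I₁ := by
    have e2 : (2 : ENNReal) = ENNReal.ofReal 2 := by simp
    calc 2 * ENNReal.ofReal ((d / 4) * (1 - ε) ^ m)
        = ENNReal.ofReal ((d / 2) * (1 - ε) ^ m) := by
          rw [e2, ← ENNReal.ofReal_mul (by norm_num)]
          congr 1
          ring
      _ = ENNReal.ofReal (d / 2) * ENNReal.ofReal ((1 - ε) ^ m) := by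
          rw [← ENNReal.ofReal_mul (by linarith)]
      _ ≤ ENNReal.ofReal (d / 2) * (Pm₀ A + Pm₁ Aᶜ) := by gcongr
      _ = ENNReal.ofReal (d / 2) * Pm₀ A + ENNReal.ofReal (d / 2) * Pm₁ Aᶜ := by
          rw [mul_add]
      _ ≤ I₀ + I₁ := add_le_add h₀ h₁
  have hmax : I₀ + I₁ ≤ 2 * max I₀ I₁ := by
    rw [two_mul]
    exact add_le_add (le_max_left _ _) (le_max_right _ _)
  have := hsum.trans hmax
  exact (ENNReal.mul_le_mul_iff_right (by norm_num) (by norm_num)).mp this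
end

section
/- Let P₀ and P₁ be probability measures on a standard Borel space Ω with TV(P₀, P₁) ≤ ε for some ε ∈ [0,1], let r₀, r₁ ∈ ℝ with |r₁ − r₀| ≥ δ·L where δ, L ≥ 0, and let m ≥ 1 satisfy m·ε ≤ 1/6. Then for every measurable estimator R̂ : Ω^m → ℝ, max_{j ∈ {0,1}} ∫ |R̂ − r_j| d(P_j)^{⊗m} ≥ (5/24)·δ·L. -/
open MeasureTheory
open scoped ENNReal

/-- One-step swap: if `P₀ s ≤ P₁ s + ε` for all measurable `s`, then the product measures
satisfy `P₀^m B ≤ P₁^m B + m ε`. -/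
lemma hybrid_bound {Ω : Type*} [MeasurableSpace Ω] (P₀ P₁ : Measure Ω)
    [IsProbabilityMeasure P₀] [IsProbabilityMeasure P₁] (ε : ℝ≥0∞)
    (h : ∀ s : Set Ω, MeasurableSet s → P₀ s ≤ P₁ s + ε) :
    ∀ (m : ℕ) (B : Set (Fin m → Ω)), MeasurableSet B →
      Measure.pi (fun _ : Fin m => P₀) B ≤ Measure.pi (fun _ : Fin m => P₁) B + m * ε := by
  intro m
  induction m with
  | zero =>
      intro B hB
      rw [Measure.pi_of_empty, Measure.pi_of_empty]
      simp
  | succ n ih =>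
      intro B hB
      set e := MeasurableEquiv.piFinSuccAbove (fun _ : Fin (n + 1) => Ω) 0 with he
      have h₀ := measurePreserving_piFinSuccAbove (fun _ : Fin (n + 1) => P₀) 0
      have h₁ := measurePreserving_piFinSuccAbove (fun _ : Fin (n + 1) => P₁) 0
      set C : Set (Ω × (Fin n → Ω)) := e.symm ⁻¹' B with hCdef
      have hC : MeasurableSet C := e.symm.measurable hB
      have heB : ⇑e ⁻¹' C = B := by
        rw [hCdef, ← Set.preimage_comp]
        simp
      have key₀ : Measure.pi (fun _ : Fin (n + 1) => P₀) B
          = (P₀.prod (Measure.pi fun _ : Fin n => P₀)) C := by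
        rw [← h₀.map_eq, Measure.map_apply e.measurable hC, heB]
      have key₁ : Measure.pi (fun _ : Fin (n + 1) => P₁) B
          = (P₁.prod (Measure.pi fun _ : Fin n => P₁)) C := by
        rw [← h₁.map_eq, Measure.map_apply e.measurable hC, heB]
      rw [key₀, key₁]
      -- first swap the first coordinate
      have step1 : (P₀.prod (Measure.pi fun _ : Fin n => P₀)) C
          ≤ (P₁.prod (Measure.pi fun _ : Fin n => P₀)) C + ε := by
        rw [Measure.prod_apply_symm hC, Measure.prod_apply_symm hC]
        calc ∫⁻ y, P₀ ((fun x => (x, y)) ⁻¹' C) ∂(Measure.pi fun _ : Fin n => P₀)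
            ≤ ∫⁻ y, (P₁ ((fun x => (x, y)) ⁻¹' C) + ε) ∂(Measure.pi fun _ : Fin n => P₀) := by
              refine lintegral_mono fun y => ?_
              exact h _ (hC.preimage (measurable_id.prodMk measurable_const))
          _ = (∫⁻ y, P₁ ((fun x => (x, y)) ⁻¹' C) ∂(Measure.pi fun _ : Fin n => P₀)) + ε := by
              rw [lintegral_add_right _ measurable_const, lintegral_const, measure_univ, mul_one]
      have step2 : (P₁.prod (Measure.pi fun _ : Fin n => P₀)) C
          ≤ (P₁.prod (Measure.pi fun _ : Fin n => P₁)) C + n * ε := by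
        rw [Measure.prod_apply hC, Measure.prod_apply hC]
        calc ∫⁻ x, (Measure.pi fun _ : Fin n => P₀) (Prod.mk x ⁻¹' C) ∂P₁
            ≤ ∫⁻ x, ((Measure.pi fun _ : Fin n => P₁) (Prod.mk x ⁻¹' C) + n * ε) ∂P₁ := by
              refine lintegral_mono fun x => ?_
              exact ih _ (hC.preimage measurable_prodMk_left)
          _ = (∫⁻ x, (Measure.pi fun _ : Fin n => P₁) (Prod.mk x ⁻¹' C) ∂P₁) + n * ε := by
              rw [lintegral_add_right _ measurable_const, lintegral_const, measure_univ, mul_one]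
      calc (P₀.prod (Measure.pi fun _ : Fin n => P₀)) C
          ≤ (P₁.prod (Measure.pi fun _ : Fin n => P₀)) C + ε := step1
        _ ≤ (P₁.prod (Measure.pi fun _ : Fin n => P₁)) C + n * ε + ε := add_le_add_left step2 ε
        _ = (P₁.prod (Measure.pi fun _ : Fin n => P₁)) C + (n + 1 : ℕ) * ε := by
            push_cast
            ring

/-- passive minimax lower bound, small-exposure regime: if
`TV(P₀,P₁) ≤ ε`, `|r₁ − r₀| ≥ δL`, and `mε ≤ 1/6`, then any measurable estimator from
`m` i.i.d. queries has worst-case expected absolute error at least `(5/24)·δL`. -/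
theorem stmt_9 {Ω : Type*} [MeasurableSpace Ω] [StandardBorelSpace Ω]
    (P₀ P₁ : Measure Ω) [IsProbabilityMeasure P₀] [IsProbabilityMeasure P₁]
    (ε : ℝ) (hε0 : 0 ≤ ε) (hε1 : ε ≤ 1) (hTV : TV P₀ P₁ ≤ ε)
    (r₀ r₁ : ℝ) (δ L : ℝ) (hδ : 0 ≤ δ) (hL : 0 ≤ L) (hgap : |r₁ - r₀| ≥ δ * L)
    (m : ℕ) (hm : 1 ≤ m) (hmε : (m : ℝ) * ε ≤ 1 / 6)
    (R : (Fin m → Ω) → ℝ) (hR : Measurable R) :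
    max (∫⁻ x, ENNReal.ofReal |R x - r₀| ∂(Measure.pi (fun _ : Fin m => P₀)))
        (∫⁻ x, ENNReal.ofReal |R x - r₁| ∂(Measure.pi (fun _ : Fin m => P₁)))
      ≥ ENNReal.ofReal ((5 / 24) * δ * L) := by
  -- extract the pointwise TV bound
  have hTVs : ∀ s : Set Ω, MeasurableSet s → P₀ s ≤ P₁ s + ENNReal.ofReal ε := by
    intro s hs
    have hbdd : BddAbove (Set.range fun A : {s : Set Ω // MeasurableSet s} =>
        |(P₀ A.1).toReal - (P₁ A.1).toReal|) := by
      refine ⟨2, ?_⟩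
      rintro x ⟨⟨t, ht⟩, rfl⟩
      have h0 : (P₀ t).toReal ≤ 1 := by
        have := prob_le_one (μ := P₀) (s := t)
        simpa using ENNReal.toReal_mono ENNReal.one_ne_top this
      have h1 : (P₁ t).toReal ≤ 1 := by
        have := prob_le_one (μ := P₁) (s := t)
        simpa using ENNReal.toReal_mono ENNReal.one_ne_top this
      have h0' : 0 ≤ (P₀ t).toReal := ENNReal.toReal_nonneg
      have h1' : 0 ≤ (P₁ t).toReal := ENNReal.toReal_nonneg
      rw [abs_sub_le_iff]
      constructor <;> linarith
    have hle : |(P₀ s).toReal - (P₁ s).toReal| ≤ ε :=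
      le_trans (le_ciSup hbdd ⟨s, hs⟩) hTV
    have h1 : (P₀ s).toReal ≤ (P₁ s).toReal + ε := by
      have := abs_le.1 hle
      linarith [this.2]
    calc P₀ s = ENNReal.ofReal (P₀ s).toReal := by
          rw [ENNReal.ofReal_toReal (measure_ne_top _ _)]
      _ ≤ ENNReal.ofReal ((P₁ s).toReal + ε) := ENNReal.ofReal_le_ofReal h1
      _ ≤ ENNReal.ofReal (P₁ s).toReal + ENNReal.ofReal ε := ENNReal.ofReal_add_le
      _ = P₁ s + ENNReal.ofReal ε := by rw [ENNReal.ofReal_toReal (measure_ne_top _ _)]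
  set μ₀ := Measure.pi (fun _ : Fin m => P₀) with hμ₀
  set μ₁ := Measure.pi (fun _ : Fin m => P₁) with hμ₁
  set c : ℝ := δ * L / 2 with hc
  have hc0 : 0 ≤ c := by positivity
  set A : Set (Fin m → Ω) := {x | c ≤ |R x - r₀|} with hA
  have habs : Measurable fun x => |R x - r₀| := (hR.sub measurable_const).abs
  have hAm : MeasurableSet A := habs measurableSet_Ici
  -- Markov-style lower bounds
  have hE₀ : ENNReal.ofReal c * μ₀ A ≤ ∫⁻ x, ENNReal.ofReal |R x - r₀| ∂μ₀ := by
    calc ENNReal.ofReal c * μ₀ A = ∫⁻ _ in A, ENNReal.ofReal c ∂μ₀ := by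
          rw [setLIntegral_const]
      _ ≤ ∫⁻ x in A, ENNReal.ofReal |R x - r₀| ∂μ₀ := by
          refine setLIntegral_mono (ENNReal.measurable_ofReal.comp habs) fun x hx => ?_
          exact ENNReal.ofReal_le_ofReal hx
      _ ≤ ∫⁻ x, ENNReal.ofReal |R x - r₀| ∂μ₀ := setLIntegral_le_lintegral _ _
  have hE₁ : ENNReal.ofReal c * μ₁ Aᶜ ≤ ∫⁻ x, ENNReal.ofReal |R x - r₁| ∂μ₁ := by
    calc ENNReal.ofReal c * μ₁ Aᶜ = ∫⁻ _ in Aᶜ, ENNReal.ofReal c ∂μ₁ := by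
          rw [setLIntegral_const]
      _ ≤ ∫⁻ x in Aᶜ, ENNReal.ofReal |R x - r₁| ∂μ₁ := by
          refine setLIntegral_mono
            (ENNReal.measurable_ofReal.comp ((hR.sub measurable_const).abs)) fun x hx => ?_
          refine ENNReal.ofReal_le_ofReal ?_
          have hx' : |R x - r₀| < c := not_le.1 hx
          have : |r₁ - r₀| ≤ |R x - r₀| + |R x - r₁| := by
            have := abs_sub_abs_le_abs_sub (r₁ - r₀) (R x - r₀)
            calc |r₁ - r₀| = |(R x - r₀) - (R x - r₁)| := by ring_nf
              _ ≤ |R x - r₀| + |R x - r₁| := by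
                  refine le_trans (abs_sub _ _) ?_
                  simp
          have h2 : δ * L ≤ |R x - r₀| + |R x - r₁| := le_trans hgap this
          have : δ * L = 2 * c := by rw [hc]; ring
          linarith
      _ ≤ ∫⁻ x, ENNReal.ofReal |R x - r₁| ∂μ₁ := setLIntegral_le_lintegral _ _
  -- the final goal target
  have htarget : ENNReal.ofReal ((5 / 24) * δ * L) = ENNReal.ofReal c * ENNReal.ofReal (5 / 12) := by
    rw [← ENNReal.ofReal_mul hc0]
    congr 1
    rw [hc]; ring
  rw [ge_iff_le, htarget]
  by_cases hcase : ENNReal.ofReal (5 / 12) ≤ μ₀ A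
  · refine le_trans ?_ (le_max_left _ _)
    exact le_trans (mul_le_mul_right hcase _) hE₀
  · push_neg at hcase
    refine le_trans ?_ (le_max_right _ _)
    refine le_trans (mul_le_mul_right ?_ _) hE₁
    -- show μ₁ Aᶜ ≥ 5/12
    have hyb := hybrid_bound P₀ P₁ (ENNReal.ofReal ε) hTVs m Aᶜ hAm.compl
    have hmεE : (m : ℝ≥0∞) * ENNReal.ofReal ε ≤ ENNReal.ofReal (1 / 6) := by
      calc (m : ℝ≥0∞) * ENNReal.ofReal ε = ENNReal.ofReal ((m : ℝ) * ε) := by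
            rw [ENNReal.ofReal_mul (by positivity), ENNReal.ofReal_natCast]
        _ ≤ ENNReal.ofReal (1 / 6) := ENNReal.ofReal_le_ofReal hmε
    have h1 : (1 : ℝ≥0∞) = μ₀ A + μ₀ Aᶜ := by
      rw [measure_add_measure_compl hAm, measure_univ]
    have hchain : (1 : ℝ≥0∞) ≤ ENNReal.ofReal (7 / 12) + μ₁ Aᶜ := by
      calc (1 : ℝ≥0∞) = μ₀ A + μ₀ Aᶜ := h1
        _ ≤ ENNReal.ofReal (5 / 12) + μ₀ Aᶜ := add_le_add_left hcase.le _
        _ ≤ ENNReal.ofReal (5 / 12) + (μ₁ Aᶜ + (m : ℝ≥0∞) * ENNReal.ofReal ε) :=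
            add_le_add_right hyb _
        _ ≤ ENNReal.ofReal (5 / 12) + (μ₁ Aᶜ + ENNReal.ofReal (1 / 6)) :=
            add_le_add_right (add_le_add_right hmεE _) _
        _ = ENNReal.ofReal (7 / 12) + μ₁ Aᶜ := by
            rw [add_comm (μ₁ Aᶜ) (ENNReal.ofReal (1 / 6)), ← add_assoc,
              ← ENNReal.ofReal_add (by norm_num) (by norm_num)]
            norm_num
    have hone : (1 : ℝ≥0∞) = ENNReal.ofReal (7 / 12) + ENNReal.ofReal (5 / 12) := by
      rw [← ENNReal.ofReal_add (by norm_num) (by norm_num)]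
      norm_num
    rw [hone] at hchain
    exact (ENNReal.add_le_add_iff_left ENNReal.ofReal_ne_top).1 hchain
end

section
/- Let D be a probability measure on a measurable space X, let κ₀ and κ₁ be Markov kernels from X to a measurable space Y, let c ∈ (0,1], and let S ⊆ X be a measurable set with D(S) ≤ ε such that κ₀(x) = κ₁(x) for every x ∉ S and TV(κ₀(x), κ₁(x)) ≤ c for every x ∈ S. Then the mixture distributions P₀ = D.bind κ₀ and P₁ = D.bind κ₁ satisfy TV(P₀, P₁) ≤ c·ε. -/
/-!
The two mixtures differ only through the inputs in `S`: for a measurable `A`,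
`P₀ A - P₁ A = ∫ (κ₀ x A - κ₁ x A) dD(x)`, whose integrand vanishes off `S` and is bounded by
`TV (κ₀ x) (κ₁ x) ≤ c` on `S`, so the integral is at most `c · D(S) ≤ c · ε`.
-/

open MeasureTheory ProbabilityTheory

section TotalVariation

variable {Ω : Type*} [MeasurableSpace Ω] {P Q : Measure Ω}

lemma abs_real_sub_le_TV [IsFiniteMeasure P] [IsFiniteMeasure Q] {A : Set Ω}
    (hA : MeasurableSet A) : |P.real A - Q.real A| ≤ TV P Q := by
  refine le_ciSup (f := fun B : {s : Set Ω // MeasurableSet s} => |P.real B.1 - Q.real B.1|)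
    ⟨P.real Set.univ + Q.real Set.univ, ?_⟩ ⟨A, hA⟩
  rintro _ ⟨B, rfl⟩
  have hP : P.real B ≤ P.real Set.univ + Q.real Set.univ :=
    le_add_of_le_of_nonneg (measureReal_mono (Set.subset_univ _)) measureReal_nonneg
  have hQ : Q.real B ≤ P.real Set.univ + Q.real Set.univ :=
    le_add_of_nonneg_of_le measureReal_nonneg (measureReal_mono (Set.subset_univ _))
  exact abs_sub_le_of_nonneg_of_le measureReal_nonneg hP measureReal_nonneg hQ

lemma TV_le_of_forall_abs_real_sub_le {r : ℝ}
    (h : ∀ A, MeasurableSet A → |P.real A - Q.real A| ≤ r) : TV P Q ≤ r :=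
  ciSup_le fun A => h A.1 A.2

end TotalVariation

section Mixture

variable {X Y : Type*} [MeasurableSpace X] [MeasurableSpace Y]

lemma abs_integral_le_mul_measureReal_of_eq_zero_off {μ : Measure X} {f : X → ℝ} {S : Set X}
    {c : ℝ} (hS : μ S < ⊤) (hoff : ∀ x ∉ S, f x = 0) (hon : ∀ x ∈ S, |f x| ≤ c) :
    |∫ x, f x ∂μ| ≤ c * μ.real S := by
  rw [← setIntegral_eq_integral_of_forall_compl_eq_zero hoff]
  exact norm_setIntegral_le_of_norm_le_const hS fun x hx =>
    (Real.norm_eq_abs _).trans_le (hon x hx)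

lemma MeasureTheory.Measure.real_bind_apply (μ : Measure X) (κ : Kernel X Y) [IsFiniteKernel κ] {A : Set Y}
    (hA : MeasurableSet A) : (μ.bind κ).real A = ∫ x, (κ x).real A ∂μ := by
  rw [measureReal_def, Measure.bind_apply hA κ.aemeasurable]
  exact (integral_toReal (κ.measurable_coe hA).aemeasurable
    (ae_of_all _ fun x => measure_lt_top _ _)).symm

theorem TV_bind_le_mul_measureReal (D : Measure X) [IsFiniteMeasure D] (κ₀ κ₁ : Kernel X Y)
    [IsFiniteKernel κ₀] [IsFiniteKernel κ₁] {S : Set X} {c : ℝ}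
    (hagree : ∀ x ∉ S, κ₀ x = κ₁ x) (hpartial : ∀ x ∈ S, TV (κ₀ x) (κ₁ x) ≤ c) :
    TV (D.bind κ₀) (D.bind κ₁) ≤ c * D.real S := by
  refine TV_le_of_forall_abs_real_sub_le fun A hA => ?_
  rw [Measure.real_bind_apply D κ₀ hA, Measure.real_bind_apply D κ₁ hA,
    ← integral_sub (Kernel.IsFiniteKernel.integrable D κ₀ hA)
      (Kernel.IsFiniteKernel.integrable D κ₁ hA)]
  exact abs_integral_le_mul_measureReal_of_eq_zero_off (measure_lt_top D S)
    (fun x hx => by rw [hagree x hx, sub_self])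
    fun x hx => (abs_real_sub_le_TV hA).trans (hpartial x hx)

end Mixture

theorem stmt_18_general {X Y : Type*} [MeasurableSpace X] [MeasurableSpace Y]
    (D : Measure X) [IsProbabilityMeasure D]
    (κ₀ κ₁ : Kernel X Y) [IsMarkovKernel κ₀] [IsMarkovKernel κ₁]
    (c : ℝ) (hc0 : 0 < c)
    (ε : ℝ) (hε : 0 ≤ ε)
    (S : Set X) (hSmass : D S ≤ ENNReal.ofReal ε)
    (hagree : ∀ x ∉ S, κ₀ x = κ₁ x)
    (hpartial : ∀ x ∈ S, TV (κ₀ x) (κ₁ x) ≤ c) :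
    TV (D.bind (fun x => κ₀ x)) (D.bind (fun x => κ₁ x)) ≤ c * ε :=
  (TV_bind_le_mul_measureReal D κ₀ κ₁ hagree hpartial).trans
    (mul_le_mul_of_nonneg_left (ENNReal.toReal_le_of_le_ofReal hε hSmass) hc0.le)

/-- partial distinguishability: if the Markov kernels `κ₀` and `κ₁`
agree off a measurable set `S` with `D(S) ≤ ε`, and `TV(κ₀(x), κ₁(x)) ≤ c` for every
`x ∈ S`, then `TV(D.bind κ₀, D.bind κ₁) ≤ c·ε`. -/
theorem stmt_18 {X Y : Type*} [MeasurableSpace X] [MeasurableSpace Y]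
    (D : Measure X) [IsProbabilityMeasure D]
    (κ₀ κ₁ : Kernel X Y) [IsMarkovKernel κ₀] [IsMarkovKernel κ₁]
    (c : ℝ) (hc0 : 0 < c) (hc1 : c ≤ 1)
    (ε : ℝ) (hε : 0 ≤ ε)
    (S : Set X) (hS : MeasurableSet S) (hSmass : D S ≤ ENNReal.ofReal ε)
    (hagree : ∀ x ∉ S, κ₀ x = κ₁ x)
    (hpartial : ∀ x ∈ S, TV (κ₀ x) (κ₁ x) ≤ c) :
    TV (D.bind (fun x => κ₀ x)) (D.bind (fun x => κ₁ x)) ≤ c * ε :=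
  stmt_18_general D κ₀ κ₁ c hc0 ε hε S hSmass hagree hpartial
end

section
/- Let c ∈ (0,1] and ε ∈ [0,1], let P₀ and P₁ be probability measures on a standard Borel space Ω with TV(P₀, P₁) ≤ c·ε, let r₀, r₁ ∈ ℝ with |r₁ − r₀| ≥ δ·L where δ, L ≥ 0, and let m ≥ 1 satisfy m·ε ≤ 1/6. Then for every measurable estimator R̂ : Ω^m → ℝ, max_{j ∈ {0,1}} ∫ |R̂ − r_j| d(P_j)^{⊗m} ≥ (δL/4)(1 − cε)^m ≥ (5/24)·c·δ·L. -/
open MeasureTheory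

/-- Monotonicity of the finite product measure on measurable sets. -/
lemma pi_measure_mono {ι : Type*} [Fintype ι] {α : ι → Type*} [∀ i, MeasurableSpace (α i)]
    {μ ν : ∀ i, Measure (α i)} (h : ∀ i, μ i ≤ ν i) {s : Set (∀ i, α i)}
    (hs : MeasurableSet s) : Measure.pi μ s ≤ Measure.pi ν s := by
  rw [Measure.pi_def, Measure.pi_def, toMeasure_apply _ _ hs, toMeasure_apply _ _ hs]
  refine OuterMeasure.le_pi.mpr (fun t _ => ?_) s
  refine (OuterMeasure.pi_pi_le _ t).trans ?_
  exact Finset.prod_le_prod' fun i _ => (h i) (t i)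

/-- passive minimax lower bound under partial distinguishability: if
`TV(P₀,P₁) ≤ cε`, `|r₁ − r₀| ≥ δL`, and `mε ≤ 1/6`, then any measurable estimator from
`m` i.i.d. queries has worst-case expected absolute error at least
`(δL/4)(1 − cε)^m ≥ (5/24)·c·δ·L`. -/
theorem stmt_19 {Ω : Type*} [MeasurableSpace Ω] [StandardBorelSpace Ω]
    (c : ℝ) (hc0 : 0 < c) (hc1 : c ≤ 1)
    (ε : ℝ) (hε0 : 0 ≤ ε) (hε1 : ε ≤ 1)
    (P₀ P₁ : Measure Ω) [IsProbabilityMeasure P₀] [IsProbabilityMeasure P₁]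
    (hTV : TV P₀ P₁ ≤ c * ε)
    (r₀ r₁ : ℝ) (δ L : ℝ) (hδ : 0 ≤ δ) (hL : 0 ≤ L) (hgap : |r₁ - r₀| ≥ δ * L)
    (m : ℕ) (hm : 1 ≤ m) (hmε : (m : ℝ) * ε ≤ 1 / 6)
    (R : (Fin m → Ω) → ℝ) (hR : Measurable R) :
    max (∫⁻ x, ENNReal.ofReal |R x - r₀| ∂(Measure.pi (fun _ : Fin m => P₀)))
        (∫⁻ x, ENNReal.ofReal |R x - r₁| ∂(Measure.pi (fun _ : Fin m => P₁)))
      ≥ ENNReal.ofReal ((δ * L / 4) * (1 - c * ε) ^ m) ∧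
    ENNReal.ofReal ((δ * L / 4) * (1 - c * ε) ^ m)
      ≥ ENNReal.ofReal ((5 / 24) * c * δ * L) := by
  have hcε0 : 0 ≤ c * ε := mul_nonneg hc0.le hε0
  have hcε1 : c * ε ≤ 1 := by nlinarith
  constructor
  · -- main inequality
    set μ : Measure Ω := P₀ + P₁ with hμ
    have hac0 : P₀ ≪ μ := Measure.absolutelyContinuous_of_le (Measure.le_add_right le_rfl)
    have hac1 : P₁ ≪ μ := Measure.absolutelyContinuous_of_le (Measure.le_add_left le_rfl)
    set f : Ω → ENNReal := P₀.rnDeriv μ with hf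
    set g : Ω → ENNReal := P₁.rnDeriv μ with hg
    have hfm : Measurable f := Measure.measurable_rnDeriv _ _
    have hgm : Measurable g := Measure.measurable_rnDeriv _ _
    have hP₀ : μ.withDensity f = P₀ := Measure.withDensity_rnDeriv_eq _ _ hac0
    have hP₁ : μ.withDensity g = P₁ := Measure.withDensity_rnDeriv_eq _ _ hac1
    set κ : Measure Ω := μ.withDensity (fun a => min (f a) (g a)) with hκ
    have hκ0 : κ ≤ P₀ := by
      rw [← hP₀]; exact withDensity_mono (ae_of_all _ fun a => min_le_left _ _)
    have hκ1 : κ ≤ P₁ := by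
      rw [← hP₁]; exact withDensity_mono (ae_of_all _ fun a => min_le_right _ _)
    haveI : IsFiniteMeasure κ := isFiniteMeasure_of_le P₀ hκ0
    -- overlap lower bound : κ univ ≥ 1 - cε
    set A : Set Ω := {a | g a < f a} with hA
    have hAm : MeasurableSet A := measurableSet_lt hgm hfm
    have hκA : κ A = P₁ A := by
      rw [hκ, withDensity_apply _ hAm, ← hP₁, withDensity_apply _ hAm]
      exact setLIntegral_congr_fun hAm (fun a ha => min_eq_right (le_of_lt ha))
    have hκAc : κ Aᶜ = P₀ Aᶜ := by
      rw [hκ, withDensity_apply _ hAm.compl, ← hP₀, withDensity_apply _ hAm.compl]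
      exact setLIntegral_congr_fun hAm.compl
        (fun a ha => min_eq_left (not_lt.mp ha))
    have hκuniv : κ Set.univ = P₁ A + P₀ Aᶜ := by
      rw [← measure_add_measure_compl hAm, hκA, hκAc]
    have hTVA : (P₀ A).toReal - (P₁ A).toReal ≤ c * ε := by
      have hbdd : BddAbove (Set.range fun A : {s : Set Ω // MeasurableSet s} =>
          |(P₀ A.1).toReal - (P₁ A.1).toReal|) := by
        refine ⟨1, ?_⟩
        rintro x ⟨B, rfl⟩
        have h0 : P₀ B.1 ≤ 1 := prob_le_one
        have h1 : P₁ B.1 ≤ 1 := prob_le_one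
        have h0' : (P₀ B.1).toReal ≤ 1 := by
          simpa using ENNReal.toReal_mono ENNReal.one_ne_top h0
        have h1' : (P₁ B.1).toReal ≤ 1 := by
          simpa using ENNReal.toReal_mono ENNReal.one_ne_top h1
        have h0'' : 0 ≤ (P₀ B.1).toReal := ENNReal.toReal_nonneg
        have h1'' : 0 ≤ (P₁ B.1).toReal := ENNReal.toReal_nonneg
        rw [abs_le]; constructor <;> linarith
      have := le_ciSup hbdd (⟨A, hAm⟩ : {s : Set Ω // MeasurableSet s})
      calc (P₀ A).toReal - (P₁ A).toReal ≤ |(P₀ A).toReal - (P₁ A).toReal| := le_abs_self _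
        _ ≤ TV P₀ P₁ := this
        _ ≤ c * ε := hTV
    have hκlow : ENNReal.ofReal (1 - c * ε) ≤ κ Set.univ := by
      have hne : κ Set.univ ≠ ⊤ := measure_ne_top _ _
      have htr : 1 - c * ε ≤ (κ Set.univ).toReal := by
        rw [hκuniv]
        have h0A : (P₀ A).toReal ≤ 1 := by
          simpa using ENNReal.toReal_mono ENNReal.one_ne_top (prob_le_one (μ := P₀) (s := A))
        have hcompl : (P₀ Aᶜ).toReal = 1 - (P₀ A).toReal := by
          rw [measure_compl hAm (measure_ne_top _ _), measure_univ,
            ENNReal.toReal_sub_of_le prob_le_one ENNReal.one_ne_top, ENNReal.toReal_one]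
        rw [ENNReal.toReal_add (measure_ne_top _ _) (measure_ne_top _ _), hcompl]
        linarith
      calc ENNReal.ofReal (1 - c * ε) ≤ ENNReal.ofReal (κ Set.univ).toReal :=
            ENNReal.ofReal_le_ofReal htr
        _ = κ Set.univ := ENNReal.ofReal_toReal hne
    -- the two-point argument
    set B : Set (Fin m → Ω) := {x | |R x - r₀| < δ * L / 2} with hB
    have hBm : MeasurableSet B :=
      measurableSet_lt ((hR.sub measurable_const).abs) measurable_const
    set ν₀ : Measure (Fin m → Ω) := Measure.pi (fun _ : Fin m => P₀) with hν₀
    set ν₁ : Measure (Fin m → Ω) := Measure.pi (fun _ : Fin m => P₁) with hν₁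
    set νκ : Measure (Fin m → Ω) := Measure.pi (fun _ : Fin m => κ) with hνκ
    have hνκuniv : νκ Set.univ = (κ Set.univ) ^ m := by
      rw [hνκ, Measure.pi_univ]
      simp
    have key : ENNReal.ofReal (δ * L / 2) * ENNReal.ofReal ((1 - c * ε) ^ m)
        ≤ (∫⁻ x, ENNReal.ofReal |R x - r₀| ∂ν₀) + (∫⁻ x, ENNReal.ofReal |R x - r₁| ∂ν₁) := by
      have h0 : ENNReal.ofReal (δ * L / 2) * ν₀ Bᶜ ≤ ∫⁻ x, ENNReal.ofReal |R x - r₀| ∂ν₀ := by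
        calc ENNReal.ofReal (δ * L / 2) * ν₀ Bᶜ
            = ∫⁻ _ in Bᶜ, ENNReal.ofReal (δ * L / 2) ∂ν₀ := (setLIntegral_const _ _).symm
          _ ≤ ∫⁻ x in Bᶜ, ENNReal.ofReal |R x - r₀| ∂ν₀ := by
              refine setLIntegral_mono ((hR.sub measurable_const).abs.ennreal_ofReal)
                fun x hx => ENNReal.ofReal_le_ofReal ?_
              exact not_lt.mp hx
          _ ≤ ∫⁻ x, ENNReal.ofReal |R x - r₀| ∂ν₀ := setLIntegral_le_lintegral _ _
      have h1 : ENNReal.ofReal (δ * L / 2) * ν₁ B ≤ ∫⁻ x, ENNReal.ofReal |R x - r₁| ∂ν₁ := by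
        calc ENNReal.ofReal (δ * L / 2) * ν₁ B
            = ∫⁻ _ in B, ENNReal.ofReal (δ * L / 2) ∂ν₁ := (setLIntegral_const _ _).symm
          _ ≤ ∫⁻ x in B, ENNReal.ofReal |R x - r₁| ∂ν₁ := by
              refine setLIntegral_mono ((hR.sub measurable_const).abs.ennreal_ofReal)
                fun x hx => ENNReal.ofReal_le_ofReal ?_
              have hx' : |R x - r₀| < δ * L / 2 := hx
              have : δ * L ≤ |r₁ - r₀| := hgap
              have habs : |r₁ - r₀| ≤ |R x - r₁| + |R x - r₀| := by
                have := abs_sub_abs_le_abs_sub (r₁ - r₀) (R x - r₀)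
                calc |r₁ - r₀| = |(r₁ - R x) + (R x - r₀)| := by ring_nf
                  _ ≤ |r₁ - R x| + |R x - r₀| := abs_add_le _ _
                  _ = |R x - r₁| + |R x - r₀| := by rw [abs_sub_comm]
              linarith
          _ ≤ ∫⁻ x, ENNReal.ofReal |R x - r₁| ∂ν₁ := setLIntegral_le_lintegral _ _
      have hmeas : ENNReal.ofReal ((1 - c * ε) ^ m) ≤ ν₀ Bᶜ + ν₁ B := by
        have hκB : νκ Bᶜ ≤ ν₀ Bᶜ := pi_measure_mono (fun _ => hκ0) hBm.compl
        have hκB' : νκ B ≤ ν₁ B := pi_measure_mono (fun _ => hκ1) hBm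
        have : ENNReal.ofReal ((1 - c * ε) ^ m) ≤ νκ Set.univ := by
          rw [hνκuniv, ENNReal.ofReal_pow (by linarith : (0:ℝ) ≤ 1 - c * ε)]
          exact pow_le_pow_left' hκlow m
        refine this.trans ?_
        rw [← measure_add_measure_compl (μ := νκ) hBm, add_comm]
        exact add_le_add hκB hκB'
      calc ENNReal.ofReal (δ * L / 2) * ENNReal.ofReal ((1 - c * ε) ^ m)
          ≤ ENNReal.ofReal (δ * L / 2) * (ν₀ Bᶜ + ν₁ B) := by
            exact mul_le_mul_right hmeas _
        _ = ENNReal.ofReal (δ * L / 2) * ν₀ Bᶜ + ENNReal.ofReal (δ * L / 2) * ν₁ B := by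
            rw [mul_add]
        _ ≤ _ := add_le_add h0 h1
    -- conclude with the max
    have hδL : 0 ≤ δ * L := mul_nonneg hδ hL
    have hpow : (0:ℝ) ≤ (1 - c * ε) ^ m := pow_nonneg (by linarith) m
    have h2 : ENNReal.ofReal (δ * L / 2) * ENNReal.ofReal ((1 - c * ε) ^ m)
        = 2 * ENNReal.ofReal ((δ * L / 4) * (1 - c * ε) ^ m) := by
      rw [← ENNReal.ofReal_mul (by linarith), ← ENNReal.ofReal_ofNat,
        ← ENNReal.ofReal_mul (by norm_num)]
      ring_nf
    have hmax : (∫⁻ x, ENNReal.ofReal |R x - r₀| ∂ν₀) + (∫⁻ x, ENNReal.ofReal |R x - r₁| ∂ν₁)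
        ≤ 2 * max (∫⁻ x, ENNReal.ofReal |R x - r₀| ∂ν₀)
            (∫⁻ x, ENNReal.ofReal |R x - r₁| ∂ν₁) := by
      rw [two_mul]
      exact add_le_add (le_max_left _ _) (le_max_right _ _)
    have := key.trans hmax
    rw [h2] at this
    exact (ENNReal.mul_le_mul_iff_right two_ne_zero ENNReal.ofNat_ne_top).mp this
  · -- numeric inequality
    apply ENNReal.ofReal_le_ofReal
    have hδL : 0 ≤ δ * L := mul_nonneg hδ hL
    have hbern : 1 - (m : ℝ) * (c * ε) ≤ (1 - c * ε) ^ m := by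
      have := one_add_mul_le_pow (a := -(c * ε)) (by linarith) m
      calc 1 - (m:ℝ) * (c * ε) = 1 + (m:ℝ) * (-(c * ε)) := by ring
        _ ≤ (1 + -(c * ε)) ^ m := this
        _ = (1 - c * ε) ^ m := by ring_nf
    have hmc : (m : ℝ) * (c * ε) ≤ c / 6 := by
      have : (m:ℝ) * (c * ε) = c * ((m:ℝ) * ε) := by ring
      rw [this]
      calc c * ((m:ℝ) * ε) ≤ c * (1/6) := by
            exact mul_le_mul_of_nonneg_left hmε hc0.le
        _ = c / 6 := by ring
    have h1 : 1 - c / 6 ≤ (1 - c * ε) ^ m := by linarith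
    calc (5 / 24) * c * δ * L = (δ * L / 4) * (5 * c / 6) := by ring
      _ ≤ (δ * L / 4) * (1 - c / 6) := by
          apply mul_le_mul_of_nonneg_left _ (by linarith)
          linarith
      _ ≤ (δ * L / 4) * (1 - c * ε) ^ m := by
          apply mul_le_mul_of_nonneg_left h1 (by linarith)
end
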